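/- Let β > 0 and k be real numbers, and define u : (0,∞) → ℝ by u(r) = r^k·(k + β + (k − β)r^{2β})/(1 + r^{2β}). Then u is smooth on (0,∞) and satisfies the ordinary differential equation r²u″(r) + r u′(r) − k²u(r) = −(8β²r^{2β}/(1 + r^{2β})²)·u(r) for all r > 0. -/

import Mathlib

noncomputable def uFun (β k : ℝ) : ℝ → ℝ :=
  fun r => r ^ k * (k + β + (k - β) * r ^ (2 * β)) / (1 + r ^ (2 * β))

noncomputable def u1Fun (β k : ℝ) : ℝ → ℝ :=
  fun r => r ^ (k - 1) *
    (k * (k + β + (k - β) * r ^ (2 * β)) * (1 + r ^ (2 * β)) - 4 * β ^ 2 * r ^ (2 * β)) /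
    (1 + r ^ (2 * β)) ^ 2

lemma denom_pos (β : ℝ) {r : ℝ} (hr : 0 < r) : (0:ℝ) < 1 + r ^ (2 * β) := by positivity

lemma uFun_hasDerivAt (β k : ℝ) {r : ℝ} (hr : 0 < r) :
    HasDerivAt (uFun β k) (u1Fun β k r) r := by
  have hD := (denom_pos β hr).ne'
  have h1 : HasDerivAt (fun r : ℝ => r ^ k) (k * r ^ (k - 1)) r :=
    Real.hasDerivAt_rpow_const (Or.inl hr.ne')
  have h2 : HasDerivAt (fun r : ℝ => r ^ (2 * β)) (2 * β * r ^ (2 * β - 1)) r :=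
    Real.hasDerivAt_rpow_const (Or.inl hr.ne')
  have h3 : HasDerivAt (fun r : ℝ => k + β + (k - β) * r ^ (2 * β))
      ((k - β) * (2 * β * r ^ (2 * β - 1))) r := (h2.const_mul _).const_add _
  have h4 : HasDerivAt (fun r : ℝ => 1 + r ^ (2 * β)) (2 * β * r ^ (2 * β - 1)) r :=
    h2.const_add _
  have h := (h1.mul h3).div h4 hD
  refine h.congr_deriv ?_
  unfold u1Fun
  rw [Real.rpow_sub_one hr.ne', Real.rpow_sub_one hr.ne', Pi.mul_apply]
  have hk : (0:ℝ) < r ^ k := Real.rpow_pos_of_pos hr _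
  field_simp
  ring

theorem stmt_4 (β k : ℝ) (hβ : 0 < β) :
    ContDiffOn ℝ (⊤ : ℕ∞) (uFun β k) (Set.Ioi 0) ∧
    ∀ r : ℝ, 0 < r →
      r ^ 2 * deriv (deriv (uFun β k)) r + r * deriv (uFun β k) r - k ^ 2 * uFun β k r
        = -(8 * β ^ 2 * r ^ (2 * β) / (1 + r ^ (2 * β)) ^ 2) * uFun β k r := by
  constructor
  · intro r hr
    have hr : (0:ℝ) < r := hr
    have hD := (denom_pos β hr).ne'
    exact (((Real.contDiffAt_rpow_const_of_ne hr.ne').mul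
      (contDiffAt_const.add ((contDiffAt_const (c := k - β)).mul (Real.contDiffAt_rpow_const_of_ne hr.ne')))).div
      (contDiffAt_const.add (Real.contDiffAt_rpow_const_of_ne hr.ne')) hD).contDiffWithinAt
  · intro r hr
    have hD0 := denom_pos β hr
    have hD := hD0.ne'
    have h1 : HasDerivAt (fun r : ℝ => r ^ (k - 1)) ((k - 1) * r ^ (k - 1 - 1)) r :=
      Real.hasDerivAt_rpow_const (Or.inl hr.ne')
    have h2 : HasDerivAt (fun r : ℝ => r ^ (2 * β)) (2 * β * r ^ (2 * β - 1)) r :=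
      Real.hasDerivAt_rpow_const (Or.inl hr.ne')
    have hN : HasDerivAt (fun r : ℝ => k + β + (k - β) * r ^ (2 * β))
        ((k - β) * (2 * β * r ^ (2 * β - 1))) r := (h2.const_mul _).const_add _
    have hDd : HasDerivAt (fun r : ℝ => 1 + r ^ (2 * β)) (2 * β * r ^ (2 * β - 1)) r :=
      h2.const_add _
    have hH : HasDerivAt (fun r : ℝ =>
        k * (k + β + (k - β) * r ^ (2 * β)) * (1 + r ^ (2 * β)) - 4 * β ^ 2 * r ^ (2 * β))
        ((k * ((k - β) * (2 * β * r ^ (2 * β - 1)))) * (1 + r ^ (2 * β))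
          + k * (k + β + (k - β) * r ^ (2 * β)) * (2 * β * r ^ (2 * β - 1))
          - 4 * β ^ 2 * (2 * β * r ^ (2 * β - 1))) r :=
      ((hN.const_mul k).mul hDd).sub (h2.const_mul _)
    have hG := (h1.mul hH).div (hDd.pow 2) (by simp only [Pi.pow_apply]; positivity)
    have hu1 : HasDerivAt (u1Fun β k) _ r := hG
    -- deriv (deriv u) r = deriv u1 r
    have hev : deriv (uFun β k) =ᶠ[nhds r] u1Fun β k := by
      filter_upwards [Ioi_mem_nhds hr] with x hx
      exact (uFun_hasDerivAt β k hx).deriv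
    have e2 : deriv (deriv (uFun β k)) r = deriv (u1Fun β k) r := hev.deriv_eq
    rw [e2, hu1.deriv, (uFun_hasDerivAt β k hr).deriv]
    unfold uFun u1Fun
    have hk : (0:ℝ) < r ^ k := Real.rpow_pos_of_pos hr _
    have hb : (0:ℝ) < r ^ (2 * β) := Real.rpow_pos_of_pos hr _
    simp only [Real.rpow_sub_one hr.ne', Pi.pow_apply, Pi.mul_apply]
    field_simp
    ring
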